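/- Robustness of exponential fitting: let C₀(m) = A₀αᵐ + B₀ and C₁(m) = A₁βᵐ + B₁ with 0 < α, β < 1, A₀ > 0, and suppose |C₁(m) − C₀(m)| ≤ ε for all integers m ≥ M, where 2ε < A₀α^M. Then |β − α| ≤ 2ε(α+1)/(A₀α^M − 2ε). -/
import Mathlib


/-- Robustness of exponential fitting: if two exponential decay curves
`C₀(m) = A₀αᵐ + B₀` and `C₁(m) = A₁βᵐ + B₁` (with `0 < α, β < 1`, `A₀ > 0`) are
`ε`-close for all integers `m ≥ M`, where `2ε < A₀α^M`, then
`|β − α| ≤ 2ε(α+1)/(A₀α^M − 2ε)`. -/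
theorem exponential_fit_robustness (A₀ B₀ A₁ B₁ α β ε : ℝ) (M : ℕ)
    (hα₀ : 0 < α) (hα₁ : α < 1) (hβ₀ : 0 < β) (hβ₁ : β < 1) (hA₀ : 0 < A₀)
    (hε : 2 * ε < A₀ * α ^ M)
    (h : ∀ m : ℕ, M ≤ m → |(A₁ * β ^ m + B₁) - (A₀ * α ^ m + B₀)| ≤ ε) :
    |β - α| ≤ 2 * ε * (α + 1) / (A₀ * α ^ M - 2 * ε) := by
  have hε0 : 0 ≤ ε := (abs_nonneg _).trans (h M le_rfl)
  have hlimα : Filter.Tendsto (fun n : ℕ => A₀ * α ^ n) Filter.atTop (nhds 0) := by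
    simpa using (tendsto_pow_atTop_nhds_zero_of_lt_one hα₀.le hα₁).const_mul A₀
  have hlimβ : Filter.Tendsto (fun n : ℕ => A₁ * β ^ n) Filter.atTop (nhds 0) := by
    simpa using (tendsto_pow_atTop_nhds_zero_of_lt_one hβ₀.le hβ₁).const_mul A₁
  have hB : |B₁ - B₀| ≤ ε := by
    have hlim : Filter.Tendsto
        (fun n : ℕ => |(A₁ * β ^ n + B₁) - (A₀ * α ^ n + B₀)|) Filter.atTop
        (nhds |B₁ - B₀|) := by
      have h1 : Filter.Tendsto (fun n : ℕ => (A₁ * β ^ n + B₁) - (A₀ * α ^ n + B₀))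
          Filter.atTop (nhds (B₁ - B₀)) := by
        have := (hlimβ.add_const B₁).sub (hlimα.add_const B₀)
        simpa using this
      exact h1.abs
    exact le_of_tendsto hlim (Filter.eventually_atTop.2 ⟨M, h⟩)
  have key : ∀ m, M ≤ m → |A₁ * β ^ m - A₀ * α ^ m| ≤ 2 * ε := by
    intro m hm
    have h1 := abs_le.1 (h m hm)
    have h2 := abs_le.1 hB
    rw [abs_le]
    constructor <;> [nlinarith; nlinarith]
  set P : ℝ := A₀ * α ^ M with hP
  have hd : 0 < P - 2 * ε := by linarith
  have k1 := abs_le.1 (key M le_rfl)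
  have k2 := abs_le.1 (key (M + 1) (Nat.le_succ M))
  have e1 : A₁ * β ^ (M + 1) = (A₁ * β ^ M) * β := by ring
  have e2 : A₀ * α ^ (M + 1) = P * α := by rw [hP]; ring
  rw [e1, e2] at k2
  set x : ℝ := A₁ * β ^ M with hx
  have hx1 : P - 2 * ε ≤ x := by linarith [k1.1]
  have hx2 : x ≤ P + 2 * ε := by linarith [k1.2]
  have hxb1 : P * α - 2 * ε ≤ x * β := by linarith [k2.1]
  have hxb2 : x * β ≤ P * α + 2 * ε := by linarith [k2.2]
  rw [abs_le]
  constructor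
  · rw [neg_le, neg_sub, le_div_iff₀ hd]
    rcases le_or_gt α β with hc | hc
    · nlinarith
    · nlinarith [mul_nonneg (sub_nonneg.2 hc.le) (sub_nonneg.2 hx1)]
  · rw [le_div_iff₀ hd]
    rcases le_or_gt β α with hc | hc
    · nlinarith
    · nlinarith [mul_nonneg (sub_nonneg.2 hc.le) (sub_nonneg.2 hx1)]
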